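/- For k ≥ t+1, the number of transversals of G(k,t) is (k−r+1)^{2r−1} if t = 2r−1 is odd, and (k−r)^r·(k−r+1)^r if t = 2r is even; i.e., |G(k,t)^⊤| = ∏_{n=0}^{t−1} |X_n| where the transversals are exactly the sets consisting of one point from each class X_n. -/
import Mathlib


open Finset

variable {α : Type*} {β : Type*}

/-- `C` is a blocking set of the family `F`: it meets every block of `F`. -/
def IsBlocking (F : Set (Finset α)) (C : Finset α) : Prop :=
  ∀ B ∈ F, ∃ x ∈ B, x ∈ C

/-- The transversal number `τ(F)`: the minimum size of a (finite) blocking set. -/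
noncomputable def tau (F : Set (Finset α)) : ℕ :=
  sInf {n | ∃ C : Finset α, C.card = n ∧ IsBlocking F C}

/-- The family `F^⊤` of transversals, i.e. minimum-size blocking sets of `F`. -/
noncomputable def transversals (F : Set (Finset α)) : Set (Finset α) :=
  {C | IsBlocking F C ∧ C.card = tau F}

/-- A family is intersecting if any two of its blocks meet. -/
def FamIntersecting (F : Set (Finset α)) : Prop :=
  ∀ A ∈ F, ∀ B ∈ F, ∃ x ∈ A, x ∈ B

/-- A family is `k`-uniform if all its blocks have size `k`. -/
def FamUniform (F : Set (Finset α)) (k : ℕ) : Prop :=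
  ∀ B ∈ F, B.card = k

/-- `F` has a finite blocking set (τ(F) < ∞). -/
def HasBlocking (F : Set (Finset α)) : Prop :=
  ∃ C : Finset α, IsBlocking F C

/-- Maximal intersecting family of `k`-sets: uniform, τ < ∞ and `F = F^⊤`. -/
noncomputable def MIF (F : Set (Finset α)) (k : ℕ) : Prop :=
  FamUniform F k ∧ HasBlocking F ∧ F = transversals F

/-- Closed intersecting family `CIF(k,t)`: a `k`-uniform intersecting family with
`τ(F) = t ≤ k - 1` and `F = (F ∪ F^⊤)^⊤`. -/
noncomputable def CIF (F : Set (Finset α)) (k t : ℕ) : Prop :=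
  FamUniform F k ∧ FamIntersecting F ∧ tau F = t ∧ t ≤ k - 1 ∧
    F = transversals (F ∪ transversals F)

/-- The point set of a family. -/
def pts (F : Set (Finset α)) : Set α := ⋃ B ∈ F, (B : Set α)

/-- `G ⊛ H`: all unions `A ∪ B` with `A ∈ G`, `B ∈ H` (for point-disjoint families
these are disjoint unions). -/
def star [DecidableEq α] (G H : Set (Finset α)) : Set (Finset α) :=
  {C | ∃ A ∈ G, ∃ B ∈ H, C = A ∪ B}


/-- The size of the class `X_n` in the cycle construction `G(k,t)`. -/
def sz (k t n : ℕ) : ℕ := if n ≤ (t - 1) / 2 then k - t / 2 else k - (t - 1) / 2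

/-- The class `X_n` of the cycle construction: points `(n, p)` with `p < |X_n|`. -/
def cls (k t n : ℕ) : Finset (ℕ × ℕ) := {n} ×ˢ Finset.range (sz k t n)

/-- The family `G(k,t)`: all `k`-sets consisting of a class `X_n` together with one
chosen point from each of the next `k - |X_n|` classes around the `t`-cycle. -/
def Gfam (k t : ℕ) : Set (Finset (ℕ × ℕ)) :=
  {B | ∃ n < t, ∃ g : ℕ → ℕ × ℕ,
    (∀ i, 1 ≤ i → i ≤ k - sz k t n → g i ∈ cls k t ((n + i) % t)) ∧
    B = cls k t n ∪ Finset.image g (Finset.Icc 1 (k - sz k t n))}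

section MyAux
open Classical

lemma mem_cls' {k t n : ℕ} {x : ℕ × ℕ} : x ∈ cls k t n ↔ x.1 = n ∧ x.2 < sz k t n := by
  obtain ⟨a, b⟩ := x
  simp only [cls, Finset.mem_product, Finset.mem_singleton, Finset.mem_range]


lemma sz_ge {k t n : ℕ} : k - t / 2 ≤ sz k t n := by
  unfold sz; split <;> omega

lemma sz_le_k {k t n : ℕ} : sz k t n ≤ k := by
  unfold sz; split <;> omega

lemma card_cls {k t n : ℕ} : (cls k t n).card = sz k t n := by
  simp [cls]

/-- One-point-per-class sets are blocking and have cardinality `t`. -/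
lemma blocks_of_system {k t : ℕ} {g : ℕ → ℕ × ℕ} (hg : ∀ n < t, g n ∈ cls k t n) :
    IsBlocking (Gfam k t) (Finset.image g (Finset.range t)) ∧
      (Finset.image g (Finset.range t)).card = t := by
  constructor
  · rintro B ⟨n, hn, f, hf, rfl⟩
    refine ⟨g n, ?_, ?_⟩
    · exact Finset.mem_union_left _ (hg n hn)
    · exact Finset.mem_image_of_mem g (Finset.mem_range.mpr hn)
  · rw [Finset.card_image_of_injOn, Finset.card_range]
    intro a ha b hb hab
    simp only [Finset.coe_range, Set.mem_Iio] at ha hb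
    have h1 := (mem_cls'.mp (hg a ha)).1
    have h2 := (mem_cls'.mp (hg b hb)).1
    rw [← h1, ← h2, hab]
end MyAux
section MyAux2
open Classical in
/-- If a blocking set misses class `n`, some class within forward distance
`k - sz k t n` is entirely contained in it. -/
lemma full_of_miss {k t : ℕ} {C : Finset (ℕ × ℕ)} (hC : IsBlocking (Gfam k t) C)
    {n : ℕ} (hn : n < t) (hmiss : ∀ x ∈ cls k t n, x ∉ C) :
    ∃ i, 1 ≤ i ∧ i ≤ k - sz k t n ∧ cls k t ((n + i) % t) ⊆ C := by
  by_contra h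
  push_neg at h
  have hex : ∀ i, 1 ≤ i → i ≤ k - sz k t n → ∃ y, y ∈ cls k t ((n + i) % t) ∧ y ∉ C := by
    intro i h1 h2
    obtain ⟨y, hy1, hy2⟩ := Finset.not_subset.mp (h i h1 h2)
    exact ⟨y, hy1, hy2⟩
  choose! g hg using hex
  obtain ⟨x, hxB, hxC⟩ := hC (cls k t n ∪ Finset.image g (Finset.Icc 1 (k - sz k t n)))
    ⟨n, hn, g, fun i h1 h2 => (hg i h1 h2).1, rfl⟩
  rcases Finset.mem_union.mp hxB with hx | hx
  · exact hmiss x hx hxC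
  · obtain ⟨i, hi, rfl⟩ := Finset.mem_image.mp hx
    rw [Finset.mem_Icc] at hi
    exact (hg i hi.1 hi.2).2 hxC

/-- If two distinct full classes are inside `C`, then `C` is big. -/
lemma two_full {k t : ℕ} (hk : t + 1 ≤ k) {C : Finset (ℕ × ℕ)} {j j' : ℕ} (hjj : j ≠ j')
    (h1 : cls k t j ⊆ C) (h2 : cls k t j' ⊆ C) : t + 2 ≤ C.card := by
  have hdisj : Disjoint (cls k t j) (cls k t j') := by
    rw [Finset.disjoint_left]
    intro x hx hx'
    exact hjj ((mem_cls'.mp hx).1 ▸ (mem_cls'.mp hx').1 ▸ rfl)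
  have hsub : cls k t j ∪ cls k t j' ⊆ C := Finset.union_subset h1 h2
  have := Finset.card_le_card hsub
  rw [Finset.card_union_of_disjoint hdisj, card_cls, card_cls] at this
  have g1 : k - t / 2 ≤ sz k t j := sz_ge
  have g2 : k - t / 2 ≤ sz k t j' := sz_ge
  omega
end MyAux2
lemma msz_le {k t n : ℕ} (hk : t + 1 ≤ k) : k - sz k t n ≤ t / 2 := by
  unfold sz; split <;> omega

open Classical in
lemma all_met {k t : ℕ} (ht : 1 ≤ t) (hk : t + 1 ≤ k) {C : Finset (ℕ × ℕ)}
    (hC : IsBlocking (Gfam k t) C) (hcard : C.card ≤ t) :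
    ∀ n < t, ∃ x ∈ C, x ∈ cls k t n := by
  by_contra hcon
  push_neg at hcon
  obtain ⟨n₀, hn₀, hm₀⟩ := hcon
  obtain ⟨i₀, hi₀1, hi₀2, hj⟩ := full_of_miss hC hn₀ (fun x hx hxC => hm₀ x hxC hx)
  set j := (n₀ + i₀) % t with hjdef
  have hjt : j < t := Nat.mod_lt _ (by omega)
  -- uniqueness of the full class
  have hFull : ∀ j', cls k t j' ⊆ C → j' = j := by
    intro j' h'
    by_contra hne
    have := two_full hk hne h' hj
    omega
  -- the set of met classes
  set Met := (Finset.range t).filter (fun n => ∃ x ∈ C, x ∈ cls k t n) with hMetdef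
  have hMetmem : ∀ n ∈ Met, ∃ x, x ∈ C ∧ x ∈ cls k t n := by
    intro n hn
    obtain ⟨x, h1, h2⟩ := (Finset.mem_filter.mp hn).2
    exact ⟨x, h1, h2⟩
  choose! p hp1 hp2 using hMetmem
  have hjMet : j ∈ Met := by
    refine Finset.mem_filter.mpr ⟨Finset.mem_range.mpr hjt, ⟨(j, 0), hj ?_, ?_⟩⟩ <;>
    · refine mem_cls'.mpr ⟨rfl, ?_⟩
      have := sz_ge (k := k) (t := t) (n := j)
      omega
  -- counting: C contains the full class j plus one point per other met class
  have count1 : sz k t j + (Met.erase j).card ≤ C.card := by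
    have hinj : Set.InjOn p (Met.erase j) := by
      intro a ha b hb hab
      have ha' := Finset.mem_of_mem_erase (Finset.mem_coe.mp ha)
      have hb' := Finset.mem_of_mem_erase (Finset.mem_coe.mp hb)
      have e1 := (mem_cls'.mp (hp2 a ha')).1
      have e2 := (mem_cls'.mp (hp2 b hb')).1
      rw [← e1, ← e2, hab]
    have hPcard : ((Met.erase j).image p).card = (Met.erase j).card :=
      Finset.card_image_of_injOn hinj
    have hdisj : Disjoint (cls k t j) ((Met.erase j).image p) := by
      rw [Finset.disjoint_left]
      intro x hx hx'
      obtain ⟨n, hn, rfl⟩ := Finset.mem_image.mp hx'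
      have := (mem_cls'.mp (hp2 n (Finset.mem_of_mem_erase hn))).1
      have := (mem_cls'.mp hx).1
      exact (Finset.ne_of_mem_erase hn) (by omega)
    have hsub : cls k t j ∪ (Met.erase j).image p ⊆ C := by
      refine Finset.union_subset hj ?_
      intro x hx
      obtain ⟨n, hn, rfl⟩ := Finset.mem_image.mp hx
      exact hp1 n (Finset.mem_of_mem_erase hn)
    have := Finset.card_le_card hsub
    rw [Finset.card_union_of_disjoint hdisj, card_cls, hPcard] at this
    exact this
  have hMetcard : Met.card + sz k t j ≤ t + 1 := by
    have := Finset.card_erase_of_mem hjMet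
    have := Finset.card_pos.mpr ⟨j, hjMet⟩
    omega
  -- the missed classes
  set Miss := Finset.range t \ Met with hMissdef
  have hMisscard : Miss.card = t - Met.card := by
    rw [hMissdef, Finset.card_sdiff_of_subset (Finset.filter_subset _ _), Finset.card_range]
  -- every missed class points back to j
  have hB : ∀ n ∈ Miss, ∃ i, 1 ≤ i ∧ i ≤ k - sz k t n ∧ (j + (t - i)) % t = n := by
    intro n hn
    rw [hMissdef, Finset.mem_sdiff, hMetdef, Finset.mem_filter] at hn
    have hnt : n < t := Finset.mem_range.mp hn.1
    have hnm : ∀ x ∈ cls k t n, x ∉ C := by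
      intro x hx hxC
      exact hn.2 ⟨hn.1, x, hxC, hx⟩
    obtain ⟨i, h1, h2, h3⟩ := full_of_miss hC hnt hnm
    have hji : (n + i) % t = j := hFull _ h3
    have hit : i ≤ t := le_trans h2 (le_trans (msz_le hk) (Nat.div_le_self t 2))
    refine ⟨i, h1, h2, ?_⟩
    calc (j + (t - i)) % t = ((n + i) % t + (t - i)) % t := by rw [hji]
      _ = (n + i + (t - i)) % t := Nat.mod_add_mod _ _ _
      _ = (n + t) % t := by congr 1; omega
      _ = n % t := Nat.add_mod_right n t
      _ = n := Nat.mod_eq_of_lt hnt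
  -- generic cardinality bound for Miss
  have hMissle : ∀ s', (∀ n ∈ Miss, ∃ i, 1 ≤ i ∧ i ≤ s' ∧ (j + (t - i)) % t = n) →
      Miss.card ≤ s' := by
    intro s' hs'
    have hsub : Miss ⊆ (Finset.Icc 1 s').image (fun i => (j + (t - i)) % t) := by
      intro n hn
      obtain ⟨i, h1, h2, h3⟩ := hs' n hn
      exact Finset.mem_image.mpr ⟨i, Finset.mem_Icc.mpr ⟨h1, h2⟩, h3⟩
    calc Miss.card ≤ _ := Finset.card_le_card hsub
      _ ≤ (Finset.Icc 1 s').card := Finset.card_image_le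
      _ = s' := by rw [Nat.card_Icc]; omega
  have hszj1 : k - t / 2 ≤ sz k t j := sz_ge
  have hszj2 : sz k t j ≤ k := sz_le_k
  rcases Nat.even_or_odd t with he | ho
  · -- t even
    obtain ⟨s, rfl⟩ := he
    by_cases hjs : j ≤ (s + s - 1) / 2
    · -- j in the first half: i = s is impossible for missed classes
      have hm : Miss.card ≤ s - 1 := by
        refine hMissle (s - 1) ?_
        intro n hn
        obtain ⟨i, h1, h2, h3⟩ := hB n hn
        have h2' : i ≤ s := le_trans h2 (by have := msz_le (n := n) hk; omega)
        refine ⟨i, h1, ?_, h3⟩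
        by_contra hile
        have his : i = s := by omega
        -- then n ≤ (t-1)/2 and n = j + s, contradiction
        have hns : n ≤ (s + s - 1) / 2 := by
          by_contra hns
          unfold sz at h2
          rw [if_neg hns] at h2
          omega
        rw [Nat.mod_eq_of_lt (by omega)] at h3
        omega
      omega
    · -- j in the second half: sz j is bigger
      have hszj : sz k (s + s) j = k - (s + s - 1) / 2 := by unfold sz; rw [if_neg hjs]
      have hm : Miss.card ≤ s := by
        refine hMissle s ?_
        intro n hn
        obtain ⟨i, h1, h2, h3⟩ := hB n hn
        exact ⟨i, h1, le_trans h2 (by have := msz_le (n := n) hk; omega), h3⟩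
      omega
  · -- t odd
    obtain ⟨s, rfl⟩ := ho
    have hm : Miss.card ≤ s := by
      refine hMissle s ?_
      intro n hn
      obtain ⟨i, h1, h2, h3⟩ := hB n hn
      exact ⟨i, h1, le_trans h2 (by have := msz_le (n := n) hk; omega), h3⟩
    omega
lemma card_ge {k t : ℕ} (ht : 1 ≤ t) (hk : t + 1 ≤ k) {C : Finset (ℕ × ℕ)}
    (hC : IsBlocking (Gfam k t) C) : t ≤ C.card := by
  by_cases hle : C.card ≤ t
  · have hall := all_met ht hk hC hle
    have hsub : Finset.range t ⊆ C.image Prod.fst := by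
      intro n hn
      obtain ⟨x, hx1, hx2⟩ := hall n (Finset.mem_range.mp hn)
      exact Finset.mem_image.mpr ⟨x, hx1, (mem_cls'.mp hx2).1⟩
    calc t = (Finset.range t).card := (Finset.card_range t).symm
      _ ≤ (C.image Prod.fst).card := Finset.card_le_card hsub
      _ ≤ C.card := Finset.card_image_le
  · omega

open Classical in
lemma struct_of_min {k t : ℕ} (ht : 1 ≤ t) (hk : t + 1 ≤ k) {C : Finset (ℕ × ℕ)}
    (hC : IsBlocking (Gfam k t) C) (hc : C.card = t) :
    ∃ g : ℕ → ℕ × ℕ, (∀ n < t, g n ∈ cls k t n) ∧ C = Finset.image g (Finset.range t) := by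
  have hall := all_met ht hk hC (le_of_eq hc)
  choose! p hp1 hp2 using hall
  have hsub : Finset.range t ⊆ C.image Prod.fst := by
    intro n hn
    have hnt := Finset.mem_range.mp hn
    exact Finset.mem_image.mpr ⟨p n, hp1 n hnt, (mem_cls'.mp (hp2 n hnt)).1⟩
  have himg : C.image Prod.fst = Finset.range t := by
    refine (Finset.eq_of_subset_of_card_le hsub ?_).symm
    calc (C.image Prod.fst).card ≤ C.card := Finset.card_image_le
      _ = (Finset.range t).card := by rw [hc, Finset.card_range]
  have hinj : Set.InjOn Prod.fst (C : Set (ℕ × ℕ)) := by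
    rw [← Finset.card_image_iff, himg, Finset.card_range, hc]
  refine ⟨p, fun n hn => hp2 n hn, ?_⟩
  ext x
  constructor
  · intro hx
    have hx1 : x.1 ∈ Finset.range t := himg ▸ Finset.mem_image_of_mem _ hx
    have hxt : x.1 < t := Finset.mem_range.mp hx1
    have hpx : p x.1 ∈ C := hp1 x.1 hxt
    have hfst : (p x.1).1 = x.1 := (mem_cls'.mp (hp2 x.1 hxt)).1
    have : p x.1 = x := hinj (Finset.mem_coe.mpr hpx) (Finset.mem_coe.mpr hx) hfst
    exact Finset.mem_image.mpr ⟨x.1, hx1, this⟩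
  · intro hx
    obtain ⟨n, hn, rfl⟩ := Finset.mem_image.mp hx
    exact hp1 n (Finset.mem_range.mp hn)

lemma g0_mem {k t : ℕ} (hk : t + 1 ≤ k) : ∀ n < t, ((n, 0) : ℕ × ℕ) ∈ cls k t n := by
  intro n hn
  refine mem_cls'.mpr ⟨rfl, ?_⟩
  have := sz_ge (k := k) (t := t) (n := n)
  omega

lemma tau_Gfam {k t : ℕ} (ht : 1 ≤ t) (hk : t + 1 ≤ k) : tau (Gfam k t) = t := by
  obtain ⟨hb, hc⟩ := blocks_of_system (g0_mem (k := k) hk)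
  apply le_antisymm
  · exact Nat.sInf_le ⟨_, hc, hb⟩
  · have hne : {n | ∃ C : Finset (ℕ × ℕ), C.card = n ∧ IsBlocking (Gfam k t) C}.Nonempty :=
      ⟨t, _, hc, hb⟩
    obtain ⟨C, hC1, hC2⟩ := Nat.sInf_mem hne
    rw [tau, ← hC1]
    exact card_ge ht hk hC2

lemma trans_Gfam {k t : ℕ} (ht : 1 ≤ t) (hk : t + 1 ≤ k) :
    transversals (Gfam k t) = {T | ∃ g : ℕ → ℕ × ℕ, (∀ n < t, g n ∈ cls k t n) ∧
      T = Finset.image g (Finset.range t)} := by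
  ext T
  simp only [transversals, Set.mem_setOf_eq, tau_Gfam ht hk]
  constructor
  · rintro ⟨hb, hc⟩
    exact struct_of_min ht hk hb hc
  · rintro ⟨g, hg, rfl⟩
    exact blocks_of_system hg
open Classical in
lemma count_Gfam {k t : ℕ} (ht : 1 ≤ t) (hk : t + 1 ≤ k) :
    (transversals (Gfam k t)).ncard = ∏ n ∈ Finset.range t, sz k t n := by
  rw [trans_Gfam ht hk]
  set Φ : (Fin t → ℕ) → Finset (ℕ × ℕ) :=
    fun h => Finset.image (fun i : Fin t => ((i : ℕ), h i)) Finset.univ with hΦ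
  set D := Fintype.piFinset (fun i : Fin t => Finset.range (sz k t (i : ℕ))) with hD
  have hset : {T | ∃ g : ℕ → ℕ × ℕ, (∀ n < t, g n ∈ cls k t n) ∧
      T = Finset.image g (Finset.range t)} = ↑(D.image Φ) := by
    ext T
    simp only [Set.mem_setOf_eq, Finset.coe_image, Set.mem_image, Finset.mem_coe]
    constructor
    · rintro ⟨g, hg, rfl⟩
      refine ⟨fun i => (g (i : ℕ)).2, ?_, ?_⟩
      · rw [hD, Fintype.mem_piFinset]
        intro i
        exact Finset.mem_range.mpr (mem_cls'.mp (hg i i.isLt)).2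
      · rw [hΦ]
        ext x
        simp only [Finset.mem_image, Finset.mem_univ, true_and, Finset.mem_range]
        constructor
        · rintro ⟨i, rfl⟩
          refine ⟨(i : ℕ), i.isLt, ?_⟩
          have hfst : (g (i : ℕ)).1 = (i : ℕ) := (mem_cls'.mp (hg i i.isLt)).1
          exact Prod.ext_iff.mpr ⟨hfst, rfl⟩
        · rintro ⟨n, hn, rfl⟩
          refine ⟨⟨n, hn⟩, ?_⟩
          have hfst : (g n).1 = n := (mem_cls'.mp (hg n hn)).1
          exact Prod.ext_iff.mpr ⟨hfst.symm, rfl⟩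
    · rintro ⟨h, hmem, rfl⟩
      rw [hD, Fintype.mem_piFinset] at hmem
      refine ⟨fun n => if hn : n < t then ((n : ℕ), h ⟨n, hn⟩) else (0, 0), ?_, ?_⟩
      · intro n hn
        simp only [dif_pos hn]
        exact mem_cls'.mpr ⟨rfl, Finset.mem_range.mp (hmem ⟨n, hn⟩)⟩
      · rw [hΦ]
        ext x
        simp only [Finset.mem_image, Finset.mem_univ, true_and, Finset.mem_range]
        constructor
        · rintro ⟨i, rfl⟩
          exact ⟨(i : ℕ), i.isLt, by simp only [dif_pos i.isLt, Fin.eta]⟩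
        · rintro ⟨n, hn, rfl⟩
          exact ⟨⟨n, hn⟩, by simp only [dif_pos hn]⟩
  rw [hset, Set.ncard_coe_finset]
  have hΦinj : Function.Injective Φ := by
    intro h h' he
    funext i
    have hx : ((i : ℕ), h i) ∈ Φ h' := by
      rw [← he, hΦ]
      exact Finset.mem_image_of_mem _ (Finset.mem_univ i)
    rw [hΦ] at hx
    obtain ⟨i', _, hii⟩ := Finset.mem_image.mp hx
    have h1 : (i' : ℕ) = (i : ℕ) := congrArg Prod.fst hii
    have h2 : h' i' = h i := congrArg Prod.snd hii
    rw [Fin.ext h1] at h2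
    exact h2.symm
  rw [Finset.card_image_of_injective _ hΦinj, hD, Fintype.card_piFinset]
  simp only [Finset.card_range]
  exact Fin.prod_univ_eq_prod_range _ t
theorem stmt_15 (k t : ℕ) (ht : 1 ≤ t) (hk : t + 1 ≤ k) :
    transversals (Gfam k t) =
      {T | ∃ g : ℕ → ℕ × ℕ, (∀ n < t, g n ∈ cls k t n) ∧
        T = Finset.image g (Finset.range t)} ∧
    (transversals (Gfam k t)).ncard = ∏ n ∈ Finset.range t, sz k t n ∧
    (∀ r, 1 ≤ r → t = 2 * r - 1 →
      (transversals (Gfam k t)).ncard = (k - r + 1) ^ (2 * r - 1)) ∧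
    (∀ r, t = 2 * r →
      (transversals (Gfam k t)).ncard = (k - r) ^ r * (k - r + 1) ^ r) := by
  refine ⟨trans_Gfam ht hk, count_Gfam ht hk, ?_, ?_⟩
  · intro r hr hrt
    subst hrt
    rw [count_Gfam ht hk]
    have hsz : ∀ n, sz k (2 * r - 1) n = k - r + 1 := by
      intro n; unfold sz; split <;> omega
    rw [Finset.prod_congr rfl fun n _ => hsz n, Finset.prod_const, Finset.card_range]
  · intro r hrt
    subst hrt
    rw [count_Gfam ht hk]
    have h2 : 2 * r = r + r := by omega
    rw [h2, Finset.prod_range_add]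
    have hsz1 : ∀ n ∈ Finset.range r, sz k (r + r) n = k - r := by
      intro n hn
      have hn' := Finset.mem_range.mp hn
      unfold sz; split <;> omega
    have hsz2 : ∀ n ∈ Finset.range r, sz k (r + r) (r + n) = k - r + 1 := by
      intro n hn
      unfold sz; split <;> omega
    rw [Finset.prod_congr rfl hsz1, Finset.prod_congr rfl hsz2,
      Finset.prod_const, Finset.prod_const, Finset.card_range]
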